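/- Let (Ω, μ) be a finite measure space and let u : [0, ∞) → L^{3/2}(μ) be differentiable on [0, ∞) with derivative u'. Assume that for every t ≥ 0 the function u(t) belongs to L³(μ), that t ↦ ‖u(t)‖_{L³(μ)}² is integrable on (0, ∞), and that t ↦ ‖u'(t)‖_{L^{3/2}(μ)}² is integrable on (0, ∞). Then ‖u(t)‖_{L^{3/2}(μ)} → 0 as t → +∞. -/

import Mathlib

/-!
On a finite measure space `‖·‖_{L^{3/2}} ≤ C ‖·‖_{L³}`, so `f := ‖u‖_{L^{3/2}}` is square
integrable on `(0, ∞)`, as is `g := ‖u'‖_{L^{3/2}}`. On a window `[t - 1, t]` pick the point `s`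
where `f` is smallest: then `f(s)² ≤ ∫ f²`, and by the fundamental theorem of calculus and
Jensen `f(t) ≤ f(s) + ∫ g ≤ f(s) + (∫ g²)^{1/2}`. Hence `f(t)² ≤ 2 ∫ f² + 2 ∫ g²` over the
window, and both window integrals tend to zero since they are tails of convergent integrals.
-/

open MeasureTheory Filter
open scoped ENNReal

instance : Fact ((1 : ℝ≥0∞) ≤ 3 / 2) := ⟨by
  rw [ENNReal.le_div_iff_mul_le (by norm_num) (by norm_num)]
  norm_num⟩

open Set Topology

theorem MeasureTheory.Lp.norm_le_toReal_eLpNorm_mul_rpow_measure_univ {Ω E : Type*}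
    [MeasurableSpace Ω] {μ : Measure Ω} [IsFiniteMeasure μ] [NormedAddCommGroup E]
    {p q : ℝ≥0∞} (hpq : p ≤ q) (hp : p ≠ 0) (f : Lp E p μ) (hf : MemLp f q μ) :
    ‖f‖ ≤ (eLpNorm f q μ).toReal * (μ univ ^ (1 / p.toReal - 1 / q.toReal)).toReal := by
  have hC : μ univ ^ (1 / p.toReal - 1 / q.toReal) ≠ ∞ := by
    refine ENNReal.rpow_ne_top_of_nonneg ?_ (measure_ne_top μ univ)
    rcases eq_or_ne q ∞ with rfl | hq
    · simp
    · exact sub_nonneg.2 <| one_div_le_one_div_of_le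
        (ENNReal.toReal_pos hp (ne_top_of_le_ne_top hq hpq)) (ENNReal.toReal_mono hq hpq)
  rw [Lp.norm_def, ← ENNReal.toReal_mul]
  exact ENNReal.toReal_mono (ENNReal.mul_ne_top hf.eLpNorm_ne_top hC)
    (eLpNorm_le_eLpNorm_mul_rpow_measure_univ hpq (Lp.aestronglyMeasurable f))

theorem tendsto_setIntegral_Ioc_sub_one_atTop {E : Type*} [NormedAddCommGroup E]
    [NormedSpace ℝ E] {h : ℝ → E} {a : ℝ} (hh : IntegrableOn h (Ioi a)) :
    Tendsto (fun t => ∫ x in Ioc (t - 1) t, h x) atTop (𝓝 0) := by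
  have hlim := (intervalIntegral_tendsto_integral_Ioi a hh tendsto_id).sub
    (intervalIntegral_tendsto_integral_Ioi a hh
      (tendsto_atTop_add_const_right atTop (-1) tendsto_id))
  rw [sub_self] at hlim
  refine hlim.congr' ?_
  filter_upwards [eventually_ge_atTop (a + 1)] with t ht
  have hint : ∀ b, a ≤ b → IntervalIntegrable h volume a b := fun b hb =>
    (intervalIntegrable_iff_integrableOn_Ioc_of_le hb).2 (hh.mono_set Ioc_subset_Ioi_self)
  rw [id, ← sub_eq_add_neg, intervalIntegral.integral_interval_sub_left (hint t (by linarith))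
    (hint (t - 1) (by linarith)), intervalIntegral.integral_of_le (by linarith)]

section Derivative

variable {E : Type*} [NormedAddCommGroup E] [NormedSpace ℝ E] [CompleteSpace E] {f f' : ℝ → E}

theorem aestronglyMeasurable_of_hasDerivAt {s : Set ℝ} (hs : MeasurableSet s)
    (hf : ∀ x ∈ s, HasDerivAt f (f' x) x) : AEStronglyMeasurable f' (volume.restrict s) :=
  (aestronglyMeasurable_deriv f _).congr <|
    (ae_restrict_iff' hs).2 (ae_of_all _ fun x hx => (hf x hx).deriv)

theorem norm_sub_le_setIntegral_norm_of_hasDerivAt {s t : ℝ} (hst : s ≤ t)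
    (hf : ∀ x ∈ Icc s t, HasDerivAt f (f' x) x) (hf' : IntegrableOn (‖f' ·‖) (Ioc s t)) :
    ‖f t - f s‖ ≤ ∫ x in Ioc s t, ‖f' x‖ := by
  have hint : IntervalIntegrable f' volume s t :=
    (intervalIntegrable_iff_integrableOn_Ioc_of_le hst).2 <|
      (integrable_norm_iff (aestronglyMeasurable_of_hasDerivAt measurableSet_Ioc
        fun x hx => hf x (Ioc_subset_Icc_self hx))).1 hf'
  rw [← intervalIntegral.integral_eq_sub_of_hasDerivAt (by rwa [uIcc_of_le hst]) hint,
    ← intervalIntegral.integral_of_le hst]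
  exact intervalIntegral.norm_integral_le_integral_norm hst

theorem norm_sq_le_setIntegral_Ioc_sub_one {t : ℝ}
    (hf : ∀ x ∈ Icc (t - 1) t, HasDerivAt f (f' x) x)
    (hf' : IntegrableOn (fun x => ‖f' x‖ ^ 2) (Ioc (t - 1) t)) :
    ‖f t‖ ^ 2 ≤ 2 * (∫ x in Ioc (t - 1) t, ‖f x‖ ^ 2) + 2 * ∫ x in Ioc (t - 1) t, ‖f' x‖ ^ 2 := by
  have : IsProbabilityMeasure (volume.restrict (Ioc (t - 1) t)) := ⟨by simp⟩
  have hcont : ContinuousOn (‖f ·‖) (Icc (t - 1) t) :=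
    ContinuousOn.norm fun x hx => (hf x hx).continuousAt.continuousWithinAt
  obtain ⟨s, hs, hmin⟩ := isCompact_Icc.exists_isMinOn (nonempty_Icc.2 (by linarith)) hcont
  have hmin_sq : ‖f s‖ ^ 2 ≤ ∫ x in Ioc (t - 1) t, ‖f x‖ ^ 2 := by
    have hf2 := (hcont.pow 2).integrableOn_Icc (μ := volume) |>.mono_set Ioc_subset_Icc_self
    calc ‖f s‖ ^ 2 = ∫ _ in Ioc (t - 1) t, ‖f s‖ ^ 2 := by simp
      _ ≤ _ := integral_mono_ae (integrable_const _) hf2 <|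
          (ae_restrict_iff' measurableSet_Ioc).2 <| ae_of_all _ fun x hx =>
            pow_le_pow_left₀ (norm_nonneg _) (hmin (Ioc_subset_Icc_self hx)) 2
  have hg1 : IntegrableOn (‖f' ·‖) (Ioc (t - 1) t) :=
    ((memLp_two_iff_integrable_sq (aestronglyMeasurable_of_hasDerivAt measurableSet_Ioc
      fun x hx => hf x (Ioc_subset_Icc_self hx)).norm).2 hf').integrable one_le_two
  have hdiff : ‖f t - f s‖ ≤ ∫ x in Ioc (t - 1) t, ‖f' x‖ :=
    (norm_sub_le_setIntegral_norm_of_hasDerivAt hs.2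
      (fun x hx => hf x ⟨hs.1.trans hx.1, hx.2⟩) (hg1.mono_set (Ioc_subset_Ioc_left hs.1))).trans
      (setIntegral_mono_set hg1 (ae_of_all _ fun _ => norm_nonneg _)
        (Ioc_subset_Ioc_left hs.1).eventuallyLE)
  have hjensen : (∫ x in Ioc (t - 1) t, ‖f' x‖) ^ 2 ≤ ∫ x in Ioc (t - 1) t, ‖f' x‖ ^ 2 :=
    (convexOn_pow 2).map_integral_le (continuousOn_pow 2) isClosed_Ici
      (ae_of_all _ fun _ => norm_nonneg _) hg1 hf'
  calc ‖f t‖ ^ 2 ≤ (‖f s‖ + ∫ x in Ioc (t - 1) t, ‖f' x‖) ^ 2 := by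
        gcongr
        exact (norm_le_insert' _ _).trans (add_le_add le_rfl hdiff)
    _ ≤ 2 * ‖f s‖ ^ 2 + 2 * (∫ x in Ioc (t - 1) t, ‖f' x‖) ^ 2 := by
        nlinarith [sq_nonneg (‖f s‖ - ∫ x in Ioc (t - 1) t, ‖f' x‖)]
    _ ≤ _ := by gcongr

theorem tendsto_norm_atTop_zero_of_integrableOn_sq {a : ℝ}
    (hf : ∀ x ∈ Ioi a, HasDerivAt f (f' x) x)
    (hf2 : IntegrableOn (fun x => ‖f x‖ ^ 2) (Ioi a))
    (hf'2 : IntegrableOn (fun x => ‖f' x‖ ^ 2) (Ioi a)) :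
    Tendsto (‖f ·‖) atTop (𝓝 0) := by
  have hbound := ((tendsto_setIntegral_Ioc_sub_one_atTop hf2).const_mul 2).add
    ((tendsto_setIntegral_Ioc_sub_one_atTop hf'2).const_mul 2)
  rw [mul_zero, add_zero] at hbound
  have hsq : Tendsto (‖f ·‖ ^ 2) atTop (𝓝 0) := by
    refine squeeze_zero' (Eventually.of_forall fun t => sq_nonneg _) ?_ hbound
    filter_upwards [eventually_gt_atTop (a + 1)] with t ht
    have hW : Icc (t - 1) t ⊆ Ioi a := fun x hx => show a < x by linarith [hx.1]
    exact norm_sq_le_setIntegral_Ioc_sub_one (fun x hx => hf x (hW hx))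
      (hf'2.mono_set (Ioc_subset_Icc_self.trans hW))
  simpa [Real.sqrt_sq (norm_nonneg _)] using hsq.sqrt

end Derivative

/-- Let `(Ω, μ)` be a finite measure space and let `u : [0,∞) → L^{3/2}(μ)` be
differentiable with derivative `u'`. If `u(t) ∈ L³(μ)` for every `t ≥ 0`, with
`t ↦ ‖u(t)‖_{L³}²` integrable on `(0,∞)`, and `t ↦ ‖u'(t)‖_{L^{3/2}}²` is
integrable on `(0,∞)`, then `‖u(t)‖_{L^{3/2}} → 0` as `t → +∞`. -/
theorem velocity_tendsto_zero {Ω : Type*} [MeasurableSpace Ω] (μ : Measure Ω)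
    [IsFiniteMeasure μ]
    (u u' : ℝ → Lp ℝ (3 / 2 : ℝ≥0∞) μ)
    (hderiv : ∀ t ∈ Set.Ici (0 : ℝ), HasDerivAt u (u' t) t)
    (hmem : ∀ t : ℝ, 0 ≤ t → MemLp (u t : Ω → ℝ) 3 μ)
    (hu3 : IntegrableOn
      (fun t => (eLpNorm (u t : Ω → ℝ) 3 μ).toReal ^ 2) (Set.Ioi (0 : ℝ)))
    (hu' : IntegrableOn (fun t => ‖u' t‖ ^ 2) (Set.Ioi (0 : ℝ))) :
    Tendsto (fun t => ‖u t‖) atTop (nhds 0) := by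
  have hderiv_pos : ∀ t ∈ Ioi (0 : ℝ), HasDerivAt u (u' t) t := fun t ht =>
    hderiv t (Ioi_subset_Ici_self ht)
  have hcont : ContinuousOn u (Ioi 0) := fun t ht =>
    (hderiv_pos t ht).continuousAt.continuousWithinAt
  have hu2 : IntegrableOn (fun t => ‖u t‖ ^ 2) (Ioi 0) := by
    let C := (μ univ ^ (1 / (3 / 2 : ℝ≥0∞).toReal - 1 / (3 : ℝ≥0∞).toReal)).toReal
    refine (hu3.mul_const (C ^ 2)).mono'
      ((hcont.norm.pow 2).aestronglyMeasurable measurableSet_Ioi) ?_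
    filter_upwards [ae_restrict_mem measurableSet_Ioi] with t ht
    rw [norm_pow, norm_norm, ← mul_pow]
    exact pow_le_pow_left₀ (norm_nonneg _) (Lp.norm_le_toReal_eLpNorm_mul_rpow_measure_univ
      (ENNReal.div_le_of_le_mul (by norm_num)) (by norm_num) (u t) (hmem t ht.le)) 2
  exact tendsto_norm_atTop_zero_of_integrableOn_sq hderiv_pos hu2 hu'
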